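/- For an unbalanced ranked set sample, the empirical log-likelihood ratio function δ ↦ l_URSS(δ) is nonnegative and attains its minimum value 0 at δ = δ̂_URSS, the Mann–Whitney statistic for URSS; that is, the maximum empirical likelihood estimator of the AUC equals the Mann–Whitney statistic for URSS. -/

import Mathlib

open MeasureTheory ProbabilityTheory Filter Finset Topology BoundedContinuousFunction

noncomputable section

namespace RSSAUC

/-- `φ(x,y) = 1` if `x < y` and `0` otherwise. -/
def phi (x y : ℝ) : ℝ := if x < y then 1 else 0

variable {Ω : Type*} [MeasurableSpace Ω]

/-- The CDF of a random variable `Z` under the probability measure `P`. -/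
def cdfOf (P : Measure Ω) (Z : Ω → ℝ) (t : ℝ) : ℝ := (P {ω | Z ω ≤ t}).toReal

/-- The CDF of a measure on `ℝ`. -/
def cdfM (μ : Measure ℝ) (t : ℝ) : ℝ := (μ (Set.Iic t)).toReal

/-- `P(W < Z)` for independent `W ~ μ` and `Z ~ ν`. -/
def probLT (μ ν : Measure ℝ) : ℝ := ((μ.prod ν) {p : ℝ × ℝ | p.1 < p.2}).toReal

/-- A balanced ranked set sample (BRSS) with consistent rankings: `X [i]j` (`i = 1,…,m`,
`j = 1,…,k`) and `Y [r]s` (`r = 1,…,n`, `s = 1,…,l`) are mutually independent; within the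
`i`-th (resp. `r`-th) stratum the `X` (resp. `Y`) variables share a common CDF `Fi i`
(resp. `Gr r`), and the continuous population CDFs satisfy `F = (1/m) ∑ᵢ Fi i` and
`G = (1/n) ∑ᵣ Gr r`. -/
structure IsBRSS (P : Measure Ω) (F G : ℝ → ℝ) {m n k l : ℕ}
    (Fi : Fin m → ℝ → ℝ) (Gr : Fin n → ℝ → ℝ)
    (X : Fin m → Fin k → Ω → ℝ) (Y : Fin n → Fin l → Ω → ℝ) : Prop where
  hm : 1 ≤ m
  hn : 1 ≤ n
  hk : 1 < k
  hl : 1 < l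
  contF : Continuous F
  contG : Continuous G
  meas_X : ∀ i j, Measurable (X i j)
  meas_Y : ∀ r s, Measurable (Y r s)
  indep : iIndepFun
      (Sum.elim (fun p : Fin m × Fin k => X p.1 p.2) (fun p : Fin n × Fin l => Y p.1 p.2)) P
  cdf_X : ∀ i j t, cdfOf P (X i j) t = Fi i t
  cdf_Y : ∀ r s t, cdfOf P (Y r s) t = Gr r t
  F_avg : ∀ t, F t = (∑ i, Fi i t) / m
  G_avg : ∀ t, G t = (∑ r, Gr r t) / n

/-- An unbalanced ranked set sample (URSS) with consistent rankings. -/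
structure IsURSS (P : Measure Ω) (F G : ℝ → ℝ) {m n : ℕ} {k : Fin m → ℕ} {l : Fin n → ℕ}
    (Fi : Fin m → ℝ → ℝ) (Gr : Fin n → ℝ → ℝ)
    (X : ∀ i, Fin (k i) → Ω → ℝ) (Y : ∀ r, Fin (l r) → Ω → ℝ) : Prop where
  hm : 1 ≤ m
  hn : 1 ≤ n
  hk : ∀ i, 1 < k i
  hl : ∀ r, 1 < l r
  contF : Continuous F
  contG : Continuous G
  meas_X : ∀ i j, Measurable (X i j)
  meas_Y : ∀ r s, Measurable (Y r s)
  indep : iIndepFun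
      (Sum.elim (fun p : Σ i, Fin (k i) => X p.1 p.2) (fun p : Σ r, Fin (l r) => Y p.1 p.2)) P
  cdf_X : ∀ i j t, cdfOf P (X i j) t = Fi i t
  cdf_Y : ∀ r s t, cdfOf P (Y r s) t = Gr r t
  F_avg : ∀ t, F t = (∑ i, Fi i t) / m
  G_avg : ∀ t, G t = (∑ r, Gr r t) / n

/-- Mann–Whitney statistic for BRSS data. -/
def deltaHatB {m n k l : ℕ} (X : Fin m → Fin k → Ω → ℝ) (Y : Fin n → Fin l → Ω → ℝ)
    (ω : Ω) : ℝ :=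
  (∑ i, ∑ j, ∑ r, ∑ s, phi (X i j ω) (Y r s ω)) / (m * k * n * l)

/-- Estimated placement value `Û_{rs}` for BRSS data. -/
def UhatB {m n k l : ℕ} (X : Fin m → Fin k → Ω → ℝ) (Y : Fin n → Fin l → Ω → ℝ)
    (r : Fin n) (s : Fin l) (ω : Ω) : ℝ :=
  1 - (∑ i, ∑ j, phi (X i j ω) (Y r s ω)) / (m * k)

/-- `V¹⁰(X_{[i]j})` for BRSS data. -/
def V10B {m n k l : ℕ} (X : Fin m → Fin k → Ω → ℝ) (Y : Fin n → Fin l → Ω → ℝ)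
    (i : Fin m) (j : Fin k) (ω : Ω) : ℝ :=
  (∑ r, ∑ s, phi (X i j ω) (Y r s ω)) / (n * l)

/-- `V⁰¹(Y_{[r]s})` for BRSS data. -/
def V01B {m n k l : ℕ} (X : Fin m → Fin k → Ω → ℝ) (Y : Fin n → Fin l → Ω → ℝ)
    (r : Fin n) (s : Fin l) (ω : Ω) : ℝ :=
  (∑ i, ∑ j, phi (X i j ω) (Y r s ω)) / (m * k)

/-- `(S¹⁰)²` for BRSS data. -/
def S10sqB {m n k l : ℕ} (X : Fin m → Fin k → Ω → ℝ) (Y : Fin n → Fin l → Ω → ℝ)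
    (ω : Ω) : ℝ :=
  ∑ i, ∑ j, (V10B X Y i j ω - (∑ j', V10B X Y i j' ω) / k) ^ 2 / ((m : ℝ) * ((k : ℝ) - 1))

/-- `(S⁰¹)²` for BRSS data. -/
def S01sqB {m n k l : ℕ} (X : Fin m → Fin k → Ω → ℝ) (Y : Fin n → Fin l → Ω → ℝ)
    (ω : Ω) : ℝ :=
  ∑ r, ∑ s, (V01B X Y r s ω - (∑ s', V01B X Y r s' ω) / l) ^ 2 / ((n : ℝ) * ((l : ℝ) - 1))

/-- Pooled variance estimator `S²` for BRSS data. -/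
def S2B {m n k l : ℕ} (X : Fin m → Fin k → Ω → ℝ) (Y : Fin n → Fin l → Ω → ℝ)
    (ω : Ω) : ℝ :=
  ((n * l : ℝ) * S10sqB X Y ω + (m * k : ℝ) * S01sqB X Y ω) / ((m * k : ℝ) + (n * l : ℝ))

/-- Mann–Whitney statistic for URSS data. -/
def deltaHatU {m n : ℕ} {k : Fin m → ℕ} {l : Fin n → ℕ}
    (X : ∀ i, Fin (k i) → Ω → ℝ) (Y : ∀ r, Fin (l r) → Ω → ℝ) (ω : Ω) : ℝ :=
  ∑ i, ∑ j, ∑ r, ∑ s, phi (X i j ω) (Y r s ω) / (m * k i * n * l r)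

/-- Estimated placement value `Û_{rs}` for URSS data. -/
def UhatU {m n : ℕ} {k : Fin m → ℕ} {l : Fin n → ℕ}
    (X : ∀ i, Fin (k i) → Ω → ℝ) (Y : ∀ r, Fin (l r) → Ω → ℝ)
    (r : Fin n) (s : Fin (l r)) (ω : Ω) : ℝ :=
  1 - ∑ i, ∑ j, phi (X i j ω) (Y r s ω) / (m * k i)

/-- `V¹⁰(X_{[i]j})` for URSS data. -/
def V10U {m n : ℕ} {k : Fin m → ℕ} {l : Fin n → ℕ}
    (X : ∀ i, Fin (k i) → Ω → ℝ) (Y : ∀ r, Fin (l r) → Ω → ℝ)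
    (i : Fin m) (j : Fin (k i)) (ω : Ω) : ℝ :=
  ∑ r, ∑ s, phi (X i j ω) (Y r s ω) / (n * l r)

/-- `V⁰¹(Y_{[r]s})` for URSS data. -/
def V01U {m n : ℕ} {k : Fin m → ℕ} {l : Fin n → ℕ}
    (X : ∀ i, Fin (k i) → Ω → ℝ) (Y : ∀ r, Fin (l r) → Ω → ℝ)
    (r : Fin n) (s : Fin (l r)) (ω : Ω) : ℝ :=
  ∑ i, ∑ j, phi (X i j ω) (Y r s ω) / (m * k i)

/-- `(S¹⁰)²` for URSS data. -/
def S10sqU {m n : ℕ} {k : Fin m → ℕ} {l : Fin n → ℕ}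
    (X : ∀ i, Fin (k i) → Ω → ℝ) (Y : ∀ r, Fin (l r) → Ω → ℝ) (ω : Ω) : ℝ :=
  ∑ i, ∑ j, (V10U X Y i j ω - (∑ j', V10U X Y i j' ω) / (k i)) ^ 2 /
    ((m : ℝ) * ((k i : ℝ) - 1))

/-- `(S⁰¹)²` for URSS data. -/
def S01sqU {m n : ℕ} {k : Fin m → ℕ} {l : Fin n → ℕ}
    (X : ∀ i, Fin (k i) → Ω → ℝ) (Y : ∀ r, Fin (l r) → Ω → ℝ) (ω : Ω) : ℝ :=
  ∑ r, ∑ s, (V01U X Y r s ω - (∑ s', V01U X Y r s' ω) / (l r)) ^ 2 /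
    ((n : ℝ) * ((l r : ℝ) - 1))

/-- Pooled variance estimator `S²` for URSS data, where `n_x = ∑ᵢ kᵢ` and `n_y = ∑ᵣ lᵣ`. -/
def S2U {m n : ℕ} {k : Fin m → ℕ} {l : Fin n → ℕ}
    (X : ∀ i, Fin (k i) → Ω → ℝ) (Y : ∀ r, Fin (l r) → Ω → ℝ) (ω : Ω) : ℝ :=
  ((∑ r, (l r : ℝ)) * S10sqU X Y ω + (∑ i, (k i : ℝ)) * S01sqU X Y ω) /
    ((∑ i, (k i : ℝ)) + (∑ r, (l r : ℝ)))

/-- Convergence in distribution of a sequence of real random variables on `(Ω, P)`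
to a limiting distribution `μ` on `ℝ`: integrals of every bounded continuous function
converge. -/
def TendstoInDistribution (P : Measure Ω) (Z : ℕ → Ω → ℝ) (μ : Measure ℝ) : Prop :=
  ∀ f : ℝ →ᵇ ℝ, Tendsto (fun t => ∫ ω, f (Z t ω) ∂P) atTop (𝓝 (∫ x, f x ∂μ))

/-- Convergence in probability of a sequence of real random variables to a constant. -/
def TendstoInProbability (P : Measure Ω) (Z : ℕ → Ω → ℝ) (c : ℝ) : Prop :=
  ∀ ε > 0, Tendsto (fun t => (P {ω | ε ≤ |Z t ω - c|}).toReal) atTop (𝓝 0)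

/-- `Z t = O_p(a t)`: stochastic boundedness at rate `a`. -/
def IsBigOp (P : Measure Ω) (Z : ℕ → Ω → ℝ) (a : ℕ → ℝ) : Prop :=
  ∀ ε > 0, ∃ M : ℝ, ∀ᶠ t in atTop, (P {ω | M * a t < |Z t ω|}).toReal < ε

/-- The chi-square distribution with one degree of freedom (the gamma distribution with
shape `1/2` and rate `1/2`). -/
def chiSq1 : Measure ℝ := gammaMeasure (1 / 2) (1 / 2)

/-- The standard normal distribution `N(0,1)`. -/
def stdNormal : Measure ℝ := gaussianReal 0 1


/-- `β = ∫ (1 − G(x))² dF(x)`, with `μ` the measure of the non-diseased population. -/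
def betaInt (μ : Measure ℝ) (G : ℝ → ℝ) : ℝ := ∫ x, (1 - G x) ^ 2 ∂μ

/-- `α = ∫ F(x)² dG(x)`, with `ν` the measure of the diseased population. -/
def alphaInt (ν : Measure ℝ) (F : ℝ → ℝ) : ℝ := ∫ x, F x ^ 2 ∂ν

/-- `β̄ = ∫ (1/n) ∑ᵣ (1 − G_{[r]}(x))² dF(x)`. -/
def betaBarInt {n : ℕ} (μ : Measure ℝ) (Gr : Fin n → ℝ → ℝ) : ℝ :=
  ∫ x, (∑ r, (1 - Gr r x) ^ 2) / n ∂μ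

/-- `ᾱ = ∫ (1/m) ∑ᵢ F_{[i]}(x)² dG(x)`. -/
def alphaBarInt {m : ℕ} (ν : Measure ℝ) (Fi : Fin m → ℝ → ℝ) : ℝ :=
  ∫ x, (∑ i, Fi i x ^ 2) / m ∂ν

/-- `δ̄₀² = (1/(mn)) ∑ᵢ ∑ᵣ δ̄_{ir}²` where `δ̄_{ir} = P(X_{[i]1} < Y_{[r]1})`,
given the stratum distributions `μi i` of `X_{[i]1}` and `νr r` of `Y_{[r]1}`. -/
def deltaBar0sq {m n : ℕ} (μi : Fin m → Measure ℝ) (νr : Fin n → Measure ℝ) : ℝ :=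
  (∑ i, ∑ r, probLT (μi i) (νr r) ^ 2) / (m * n)

/-- `φ₁₀(x) = (1/(nl)) ∑_{r,s} E[φ(x, Y_{[r]s})]`. -/
def phi10B (P : Measure Ω) {n l : ℕ} (Y : Fin n → Fin l → Ω → ℝ) (x : ℝ) : ℝ :=
  (∑ r, ∑ s, ∫ ω, phi x (Y r s ω) ∂P) / (n * l)

/-- `φ₀₁(y) = (1/(mk)) ∑_{i,j} E[φ(X_{[i]j}, y)]`. -/
def phi01B (P : Measure Ω) {m k : ℕ} (X : Fin m → Fin k → Ω → ℝ) (y : ℝ) : ℝ :=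
  (∑ i, ∑ j, ∫ ω, phi (X i j ω) y ∂P) / (m * k)

/-- Deterministic (data-level) estimated placement value `Û_{rs}` for balanced data. -/
def UhatD {m n k l : ℕ} (X : Fin m → Fin k → ℝ) (Y : Fin n → Fin l → ℝ)
    (r : Fin n) (s : Fin l) : ℝ :=
  1 - (∑ i, ∑ j, phi (X i j) (Y r s)) / (m * k)

/-- Deterministic (data-level) Mann–Whitney statistic for balanced data. -/
def deltaHatD {m n k l : ℕ} (X : Fin m → Fin k → ℝ) (Y : Fin n → Fin l → ℝ) : ℝ :=
  (∑ i, ∑ j, ∑ r, ∑ s, phi (X i j) (Y r s)) / (m * k * n * l)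

/-- Deterministic (data-level) estimated placement value `Û_{rs}` for unbalanced data. -/
def UhatUD {m n : ℕ} {k : Fin m → ℕ} {l : Fin n → ℕ}
    (X : ∀ i, Fin (k i) → ℝ) (Y : ∀ r, Fin (l r) → ℝ) (r : Fin n) (s : Fin (l r)) : ℝ :=
  1 - ∑ i, ∑ j, phi (X i j) (Y r s) / (m * k i)

/-- Deterministic (data-level) Mann–Whitney statistic for unbalanced data. -/
def deltaHatUD {m n : ℕ} {k : Fin m → ℕ} {l : Fin n → ℕ}
    (X : ∀ i, Fin (k i) → ℝ) (Y : ∀ r, Fin (l r) → ℝ) : ℝ :=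
  ∑ i, ∑ j, ∑ r, ∑ s, phi (X i j) (Y r s) / (m * k i * n * l r)

/-- Estimated placement value `Ŵ_{ij} = (1/(nl)) ∑_{r,s} φ(Y_{[r]s}, X_{[i]j})` of `X`
(the diseased distribution `G` as reference). -/
def WhatB {m n k l : ℕ} (X : Fin m → Fin k → Ω → ℝ) (Y : Fin n → Fin l → Ω → ℝ)
    (i : Fin m) (j : Fin k) (ω : Ω) : ℝ :=
  (∑ r, ∑ s, phi (Y r s ω) (X i j ω)) / (n * l)


/-- `log y ≥ (y-1)/y` for `y > 0`. -/
lemma log_ge_sub_one_div {y : ℝ} (hy : 0 < y) : (y - 1) / y ≤ Real.log y := by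
  have h := Real.log_le_sub_one_of_pos (show (0:ℝ) < y⁻¹ by positivity)
  rw [Real.log_inv] at h
  rw [div_le_iff₀ hy]
  have hinv : y⁻¹ * y = 1 := inv_mul_cancel₀ hy.ne'
  nlinarith [mul_le_mul_of_nonneg_right h hy.le]

/-- The key centering identity: the centered weighted placements sum to zero at the
Mann–Whitney statistic. -/
lemma sum_v_eq_zero {m n : ℕ} {k : Fin m → ℕ} {l : Fin n → ℕ}
    (hm : 0 < m) (hn : 0 < n) (hk : ∀ i, 0 < k i) (hl : ∀ r, 0 < l r)
    (X : ∀ i, Fin (k i) → ℝ) (Y : ∀ r, Fin (l r) → ℝ) :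
    ∑ r : Fin n, ∑ s : Fin (l r),
      (1 - UhatUD X Y r s - deltaHatUD X Y) / ((n : ℝ) * (l r : ℝ)) = 0 := by
  have hn' : (n : ℝ) ≠ 0 := Nat.cast_ne_zero.mpr hn.ne'
  have hl' : ∀ r, ((l r : ℝ)) ≠ 0 := fun r => Nat.cast_ne_zero.mpr (hl r).ne'
  have H1 : ∑ r : Fin n, ∑ s : Fin (l r),
      (1 - UhatUD X Y r s) / ((n : ℝ) * (l r : ℝ)) = deltaHatUD X Y := by
    have hterm : ∀ (r : Fin n) (s : Fin (l r)),
        (1 - UhatUD X Y r s) / ((n : ℝ) * (l r : ℝ)) =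
        ∑ i, ∑ j, phi (X i j) (Y r s) / ((m : ℝ) * (k i : ℝ) * (n : ℝ) * (l r : ℝ)) := by
      intro r s
      unfold UhatUD
      rw [sub_sub_cancel, Finset.sum_div]
      refine Finset.sum_congr rfl fun i _ => ?_
      rw [Finset.sum_div]
      refine Finset.sum_congr rfl fun j _ => ?_
      rw [div_div]
      congr 1
      ring
    calc ∑ r : Fin n, ∑ s : Fin (l r), (1 - UhatUD X Y r s) / ((n : ℝ) * (l r : ℝ))
        = ∑ r : Fin n, ∑ s : Fin (l r), ∑ i, ∑ j,
            phi (X i j) (Y r s) / ((m : ℝ) * (k i : ℝ) * (n : ℝ) * (l r : ℝ)) :=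
          Finset.sum_congr rfl fun r _ => Finset.sum_congr rfl fun s _ => hterm r s
      _ = ∑ r : Fin n, ∑ i, ∑ s : Fin (l r), ∑ j,
            phi (X i j) (Y r s) / ((m : ℝ) * (k i : ℝ) * (n : ℝ) * (l r : ℝ)) :=
          Finset.sum_congr rfl fun r _ => Finset.sum_comm
      _ = ∑ i, ∑ r : Fin n, ∑ s : Fin (l r), ∑ j,
            phi (X i j) (Y r s) / ((m : ℝ) * (k i : ℝ) * (n : ℝ) * (l r : ℝ)) :=
          Finset.sum_comm
      _ = ∑ i, ∑ r : Fin n, ∑ j, ∑ s : Fin (l r),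
            phi (X i j) (Y r s) / ((m : ℝ) * (k i : ℝ) * (n : ℝ) * (l r : ℝ)) :=
          Finset.sum_congr rfl fun i _ => Finset.sum_congr rfl fun r _ => Finset.sum_comm
      _ = ∑ i, ∑ j, ∑ r : Fin n, ∑ s : Fin (l r),
            phi (X i j) (Y r s) / ((m : ℝ) * (k i : ℝ) * (n : ℝ) * (l r : ℝ)) :=
          Finset.sum_congr rfl fun i _ => Finset.sum_comm
      _ = deltaHatUD X Y := rfl
  have H2 : ∑ r : Fin n, ∑ _s : Fin (l r), (1:ℝ) / ((n : ℝ) * (l r : ℝ)) = 1 := by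
    have h : ∀ r : Fin n, ∑ _s : Fin (l r), (1:ℝ) / ((n : ℝ) * (l r : ℝ)) = 1 / n := by
      intro r
      rw [Finset.sum_const, Finset.card_univ, Fintype.card_fin, nsmul_eq_mul]
      field_simp
      exact div_self (hl' r)
    rw [Finset.sum_congr rfl fun r _ => h r, Finset.sum_const, Finset.card_univ,
      Fintype.card_fin, nsmul_eq_mul]
    field_simp
  calc ∑ r : Fin n, ∑ s : Fin (l r),
      (1 - UhatUD X Y r s - deltaHatUD X Y) / ((n : ℝ) * (l r : ℝ))
      = ∑ r : Fin n, ∑ s : Fin (l r),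
        ((1 - UhatUD X Y r s) / ((n : ℝ) * (l r : ℝ)) -
          deltaHatUD X Y * ((1:ℝ) / ((n : ℝ) * (l r : ℝ)))) :=
        Finset.sum_congr rfl fun r _ => Finset.sum_congr rfl fun s _ => by ring
    _ = (∑ r : Fin n, ∑ s : Fin (l r), (1 - UhatUD X Y r s) / ((n : ℝ) * (l r : ℝ)))
        - deltaHatUD X Y * ∑ r : Fin n, ∑ s : Fin (l r), (1:ℝ) / ((n : ℝ) * (l r : ℝ)) := by
        rw [Finset.mul_sum, ← Finset.sum_sub_distrib]
        refine Finset.sum_congr rfl fun r _ => ?_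
        rw [Finset.mul_sum, ← Finset.sum_sub_distrib]
    _ = deltaHatUD X Y - deltaHatUD X Y * 1 := by rw [H1, H2]
    _ = 0 := by ring

/-- For unbalanced ranked set data, the empirical log-likelihood ratio
`δ ↦ l_URSS(δ)` is nonnegative (wherever the Lagrange multiplier `lam δ` solves its
defining equation with positive weights) and attains its minimum value `0` at
`δ = δ̂_URSS`, the Mann–Whitney statistic for URSS: the MELE of the AUC is the MW
statistic for URSS. -/
theorem urss_mele_eq_mann_whitney {m n : ℕ} {k : Fin m → ℕ} {l : Fin n → ℕ}
    (hm : 0 < m) (hn : 0 < n) (hk : ∀ i, 0 < k i) (hl : ∀ r, 0 < l r)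
    (X : ∀ i, Fin (k i) → ℝ) (Y : ∀ r, Fin (l r) → ℝ) (lam : ℝ → ℝ) :
    (∀ δ : ℝ,
      (∀ (r : Fin n) (s : Fin (l r)),
        0 < 1 + lam δ * ((1 - UhatUD X Y r s - δ) / ((n : ℝ) * (l r : ℝ)))) →
      (∑ r : Fin n, ∑ s : Fin (l r),
          ((1 - UhatUD X Y r s - δ) / ((n : ℝ) * (l r : ℝ))) /
            (1 + lam δ * ((1 - UhatUD X Y r s - δ) / ((n : ℝ) * (l r : ℝ))))) = 0 →
      0 ≤ 2 * ∑ r : Fin n, ∑ s : Fin (l r),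
          Real.log (1 + lam δ * ((1 - UhatUD X Y r s - δ) / ((n : ℝ) * (l r : ℝ))))) ∧
    ((∀ (r : Fin n) (s : Fin (l r)),
        0 < 1 + lam (deltaHatUD X Y) *
          ((1 - UhatUD X Y r s - deltaHatUD X Y) / ((n : ℝ) * (l r : ℝ)))) →
      (∑ r : Fin n, ∑ s : Fin (l r),
          ((1 - UhatUD X Y r s - deltaHatUD X Y) / ((n : ℝ) * (l r : ℝ))) /
            (1 + lam (deltaHatUD X Y) *
              ((1 - UhatUD X Y r s - deltaHatUD X Y) / ((n : ℝ) * (l r : ℝ))))) = 0 →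
      2 * ∑ r : Fin n, ∑ s : Fin (l r),
          Real.log (1 + lam (deltaHatUD X Y) *
            ((1 - UhatUD X Y r s - deltaHatUD X Y) / ((n : ℝ) * (l r : ℝ)))) = 0) := by
  constructor
  · -- nonnegativity
    intro δ hpos heq
    have key : ∀ (r : Fin n) (s : Fin (l r)),
        lam δ * (((1 - UhatUD X Y r s - δ) / ((n : ℝ) * (l r : ℝ))) /
          (1 + lam δ * ((1 - UhatUD X Y r s - δ) / ((n : ℝ) * (l r : ℝ))))) ≤
        Real.log (1 + lam δ * ((1 - UhatUD X Y r s - δ) / ((n : ℝ) * (l r : ℝ)))) := by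
      intro r s
      set v := (1 - UhatUD X Y r s - δ) / ((n : ℝ) * (l r : ℝ)) with hv
      have hy : 0 < 1 + lam δ * v := hpos r s
      have := log_ge_sub_one_div hy
      have hsub : (1 + lam δ * v - 1) / (1 + lam δ * v) = lam δ * (v / (1 + lam δ * v)) := by
        rw [add_sub_cancel_left, mul_div_assoc]
      rwa [hsub] at this
    have hsum : 0 ≤ ∑ r : Fin n, ∑ s : Fin (l r),
        Real.log (1 + lam δ * ((1 - UhatUD X Y r s - δ) / ((n : ℝ) * (l r : ℝ)))) := by
      have h1 : ∑ r : Fin n, ∑ s : Fin (l r),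
          lam δ * (((1 - UhatUD X Y r s - δ) / ((n : ℝ) * (l r : ℝ))) /
            (1 + lam δ * ((1 - UhatUD X Y r s - δ) / ((n : ℝ) * (l r : ℝ))))) = 0 := by
        simp only [← Finset.mul_sum]
        rw [heq, mul_zero]
      calc (0:ℝ) = ∑ r : Fin n, ∑ s : Fin (l r),
          lam δ * (((1 - UhatUD X Y r s - δ) / ((n : ℝ) * (l r : ℝ))) /
            (1 + lam δ * ((1 - UhatUD X Y r s - δ) / ((n : ℝ) * (l r : ℝ))))) := h1.symm
        _ ≤ _ := Finset.sum_le_sum fun r _ => Finset.sum_le_sum fun s _ => key r s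
    linarith
  · -- equality at the Mann–Whitney statistic
    intro hpos heq
    set δ := deltaHatUD X Y with hδ
    set t := lam δ with ht
    set v : ∀ r : Fin n, Fin (l r) → ℝ :=
      fun r s => (1 - UhatUD X Y r s - δ) / ((n : ℝ) * (l r : ℝ)) with hvdef
    have hsum0 : ∑ r : Fin n, ∑ s : Fin (l r), v r s = 0 :=
      sum_v_eq_zero hm hn hk hl X Y
    have key : ∑ r : Fin n, ∑ s : Fin (l r), t * (v r s ^ 2 / (1 + t * v r s)) = 0 := by
      have : ∀ (r : Fin n) (s : Fin (l r)),
          t * (v r s ^ 2 / (1 + t * v r s)) = v r s - v r s / (1 + t * v r s) := by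
        intro r s
        have hy : (1 + t * v r s) ≠ 0 := (hpos r s).ne'
        field_simp
        ring
      rw [Finset.sum_congr rfl fun r _ => Finset.sum_congr rfl fun s _ => this r s]
      rw [Finset.sum_congr rfl fun r _ => Finset.sum_sub_distrib _ _, Finset.sum_sub_distrib,
        hsum0, heq, sub_zero]
    have hzero : ∀ (r : Fin n) (s : Fin (l r)), t * v r s = 0 := by
      by_cases ht0 : t = 0
      · intro r s; rw [ht0, zero_mul]
      · have hnn : ∀ (r : Fin n) (s : Fin (l r)), 0 ≤ v r s ^ 2 / (1 + t * v r s) :=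
          fun r s => div_nonneg (sq_nonneg _) (hpos r s).le
        have hsq : ∑ r : Fin n, ∑ s : Fin (l r), v r s ^ 2 / (1 + t * v r s) = 0 := by
          have := key
          simp only [← Finset.mul_sum] at this
          exact (mul_eq_zero.mp this).resolve_left ht0
        have hall : ∀ r ∈ (Finset.univ : Finset (Fin n)),
            (∑ s : Fin (l r), v r s ^ 2 / (1 + t * v r s)) = 0 :=
          (Finset.sum_eq_zero_iff_of_nonneg fun r _ =>
            Finset.sum_nonneg fun s _ => hnn r s).mp hsq
        intro r s
        have := (Finset.sum_eq_zero_iff_of_nonneg fun s _ => hnn r s).mp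
          (hall r (Finset.mem_univ r)) s (Finset.mem_univ s)
        have hv0 : v r s = 0 := by
          rcases div_eq_zero_iff.mp this with h' | h'
          · exact pow_eq_zero_iff (by norm_num : (2:ℕ) ≠ 0) |>.mp h'
          · exact absurd h' (hpos r s).ne' 
        rw [hv0, mul_zero]
    have : ∑ r : Fin n, ∑ s : Fin (l r), Real.log (1 + t * v r s) = 0 := by
      refine Finset.sum_eq_zero fun r _ => Finset.sum_eq_zero fun s _ => ?_
      rw [hzero r s, add_zero, Real.log_one]
    rw [show (∑ r : Fin n, ∑ s : Fin (l r),
        Real.log (1 + lam (deltaHatUD X Y) *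
          ((1 - UhatUD X Y r s - deltaHatUD X Y) / ((n : ℝ) * (l r : ℝ))))) =
      ∑ r : Fin n, ∑ s : Fin (l r), Real.log (1 + t * v r s) from rfl, this, mul_zero]

end RSSAUC
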